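/- Let n ≥ 5 be odd. Then the sequences b₁ = (1,0,1,0,…), b₃ = (0,…,0,1,1), b₅ = (1,1,0,…,0) generate Steinhaus triangles of weight (3n-1)/2, while b₂ = (0,1,0,…,0), b₄ = (0,1,0,1,…), b₆ = (0,…,0,1,0) generate triangles of weight (3n-3)/2. -/
import Mathlib


/-- The derivative of a binary sequence: `(∂x)ᵢ = xᵢ + xᵢ₊₁`. -/
def der {n : ℕ} (x : Fin n → ZMod 2) : Fin (n - 1) → ZMod 2 :=
  fun i => x ⟨i.1, by have := i.2; omega⟩ + x ⟨i.1 + 1, by have := i.2; omega⟩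

/-- The iterated derivative `∂ʲx : F₂^{n-j}`. -/
def derIter {n : ℕ} (x : Fin n → ZMod 2) : (j : ℕ) → Fin (n - j) → ZMod 2
  | 0 => x
  | j + 1 => der (derIter x j)

/-- The weight (number of ones) of a binary sequence. -/
def wt {m : ℕ} (y : Fin m → ZMod 2) : ℕ :=
  (Finset.univ.filter fun i => y i = 1).card

/-- The weight of the Steinhaus triangle of `x`: the sum of the weights of all rows. -/
def tw {n : ℕ} (x : Fin n → ZMod 2) : ℕ :=
  ∑ j ∈ Finset.range n, wt (derIter x j)

/-- The standard basis vector `e k` with a single one in position `k`. -/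
def e (n k : ℕ) : Fin n → ZMod 2 := fun i => if i.1 = k then 1 else 0


/-- `b₁` : alternating sequence starting with 1, i.e. `1010…`. -/
def b1 (n : ℕ) : Fin n → ZMod 2 := fun i => if i.1 % 2 = 0 then 1 else 0
/-- `b₂` : single one in position 1. -/
def b2 (n : ℕ) : Fin n → ZMod 2 := e n 1
/-- `b₃` : ones in positions n-2 and n-1. -/
def b3 (n : ℕ) : Fin n → ZMod 2 := fun i => if i.1 = n - 2 ∨ i.1 = n - 1 then 1 else 0
/-- `b₄` : alternating sequence starting with 0, i.e. `0101…`. -/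
def b4 (n : ℕ) : Fin n → ZMod 2 := fun i => if i.1 % 2 = 1 then 1 else 0
/-- `b₅` : ones in positions 0 and 1. -/
def b5 (n : ℕ) : Fin n → ZMod 2 := fun i => if i.1 = 0 ∨ i.1 = 1 then 1 else 0
/-- `b₆` : single one in position n-2. -/
def b6 (n : ℕ) : Fin n → ZMod 2 := e n (n - 2)

/-! ### Auxiliary lemmas -/

section Aux

lemma der_b2 (m : ℕ) : der (b2 m) = b5 (m - 1) := by
  funext i; have hi := i.2
  simp only [der, b2, b5, e]
  split_ifs <;> first | decide | omega | (simp only [false_or, or_false] at *; omega)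

lemma der_b5 (m : ℕ) : der (b5 m) = b2 (m - 1) := by
  funext i; have hi := i.2
  simp only [der, b2, b5, e]
  split_ifs <;> first | decide | omega | (simp only [false_or, or_false] at *; omega)

lemma der_b6 (m : ℕ) : der (b6 m) = b3 (m - 1) := by
  funext i; have hi := i.2
  simp only [der, b3, b6, e]
  split_ifs <;> first | decide | omega | (simp only [false_or, or_false] at *; omega)

lemma der_b3 (m : ℕ) (hm : m ≠ 2) : der (b3 m) = b6 (m - 1) := by
  funext i; have hi := i.2
  simp only [der, b3, b6, e]
  split_ifs <;> first | decide | omega | (simp only [false_or, or_false] at *; omega)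

lemma der_b1 (m : ℕ) : der (b1 m) = fun _ => 1 := by
  funext i; have hi := i.2
  simp only [der, b1]
  split_ifs <;> first | decide | omega

lemma der_b4 (m : ℕ) : der (b4 m) = fun _ => 1 := by
  funext i; have hi := i.2
  simp only [der, b4]
  split_ifs <;> first | decide | omega

lemma sum_parity (a b : ℕ) (n : ℕ) :
    (∑ j ∈ Finset.range n, if j % 2 = 0 then a else b) = (n + 1) / 2 * a + n / 2 * b := by
  induction n with
  | zero => simp
  | succ n ih =>
    rw [Finset.sum_range_succ, ih]
    by_cases h : n % 2 = 0
    · rw [if_pos h]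
      have e3 : (n + 1 + 1) / 2 = n / 2 + 1 := by omega
      have e2 : (n + 1) / 2 = n / 2 := by omega
      rw [e3, e2]; ring
    · rw [if_neg h]
      have e2 : (n + 1 + 1) / 2 = (n + 1) / 2 := by omega
      rw [e2]
      have e3 : (n + 1) / 2 = n / 2 + 1 := by omega
      rw [e3]; ring

lemma wt_eq_zero {m : ℕ} (y : Fin m → ZMod 2) (h : ∀ i, y i = 0) : wt y = 0 := by
  refine Finset.card_eq_zero.mpr (Finset.filter_eq_empty_iff.mpr ?_)
  intro i _
  rw [h i]
  decide

lemma wt_e (m k : ℕ) (h : k < m) : wt (e m k) = 1 := by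
  unfold wt e
  rw [Finset.card_eq_one]
  refine ⟨⟨k, h⟩, ?_⟩
  ext i
  simp only [Finset.mem_filter, Finset.mem_univ, true_and, Finset.mem_singleton, Fin.ext_iff]
  constructor
  · intro hi
    by_cases hik : i.1 = k
    · exact hik
    · simp [hik] at hi
  · intro hi
    simp [hi]

lemma wt_b5 (m : ℕ) (hm : 2 ≤ m) : wt (b5 m) = 2 := by
  unfold wt b5
  have hset : (Finset.univ.filter fun i : Fin m =>
      (if i.1 = 0 ∨ i.1 = 1 then (1 : ZMod 2) else 0) = 1)
      = {⟨0, by omega⟩, ⟨1, by omega⟩} := by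
    ext i
    simp only [Finset.mem_filter, Finset.mem_univ, true_and, Finset.mem_insert,
      Finset.mem_singleton, Fin.ext_iff]
    constructor
    · intro hi
      by_cases h : i.1 = 0 ∨ i.1 = 1
      · exact h
      · simp [h] at hi
    · rintro (h | h) <;> simp [h]
  rw [hset, Finset.card_insert_of_notMem (by simp), Finset.card_singleton]

lemma wt_b3 (m : ℕ) (hm : 2 ≤ m) : wt (b3 m) = 2 := by
  unfold wt b3
  have hset : (Finset.univ.filter fun i : Fin m =>
      (if i.1 = m - 2 ∨ i.1 = m - 1 then (1 : ZMod 2) else 0) = 1)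
      = {⟨m - 2, by omega⟩, ⟨m - 1, by omega⟩} := by
    ext i
    simp only [Finset.mem_filter, Finset.mem_univ, true_and, Finset.mem_insert,
      Finset.mem_singleton, Fin.ext_iff]
    constructor
    · intro hi
      by_cases h : i.1 = m - 2 ∨ i.1 = m - 1
      · exact h
      · simp [h] at hi
    · rintro (h | h) <;> simp [h]
  rw [hset, Finset.card_insert_of_notMem (by simp only [Finset.mem_singleton, Fin.ext_iff]; omega),
    Finset.card_singleton]

lemma wt_const1 (m : ℕ) : wt (fun _ : Fin m => (1 : ZMod 2)) = m := by
  unfold wt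
  simp

lemma wt_b1 (n : ℕ) : wt (b1 n) = (n + 1) / 2 := by
  unfold wt b1
  rw [Finset.card_filter]
  have h : ∀ i : Fin n,
      (if (if i.1 % 2 = 0 then (1 : ZMod 2) else 0) = 1 then 1 else 0)
      = (fun j : ℕ => if j % 2 = 0 then 1 else 0) i.1 := by
    intro i
    by_cases hp : i.1 % 2 = 0 <;> simp [hp]
  rw [Finset.sum_congr rfl fun i _ => h i,
    Fin.sum_univ_eq_sum_range (fun j : ℕ => if j % 2 = 0 then 1 else 0) n, sum_parity]
  omega

lemma wt_b4 (n : ℕ) : wt (b4 n) = n / 2 := by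
  unfold wt b4
  rw [Finset.card_filter]
  have h : ∀ i : Fin n,
      (if (if i.1 % 2 = 1 then (1 : ZMod 2) else 0) = 1 then 1 else 0)
      = (fun j : ℕ => if j % 2 = 0 then 0 else 1) i.1 := by
    intro i
    by_cases hp : i.1 % 2 = 1
    · have : ¬ i.1 % 2 = 0 := by omega
      simp [hp, this]
    · have : i.1 % 2 = 0 := by omega
      simp [hp, this]
  rw [Finset.sum_congr rfl fun i _ => h i,
    Fin.sum_univ_eq_sum_range (fun j : ℕ => if j % 2 = 0 then 0 else 1) n, sum_parity]
  omega

/-! ### The chains of iterated derivatives -/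

lemma chain25 (n : ℕ) : ∀ j, derIter (b2 n) j = if j % 2 = 0 then b2 (n - j) else b5 (n - j) := by
  intro j
  induction j with
  | zero => rw [if_pos rfl]; rfl
  | succ j ih =>
    show der (derIter (b2 n) j) = _
    rw [ih]
    by_cases hp : j % 2 = 0
    · rw [if_pos hp, if_neg (by omega : ¬ (j + 1) % 2 = 0)]
      exact der_b2 (n - j)
    · rw [if_neg hp, if_pos (by omega : (j + 1) % 2 = 0)]
      exact der_b5 (n - j)

lemma chain52 (n : ℕ) : ∀ j, derIter (b5 n) j = if j % 2 = 0 then b5 (n - j) else b2 (n - j) := by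
  intro j
  induction j with
  | zero => rw [if_pos rfl]; rfl
  | succ j ih =>
    show der (derIter (b5 n) j) = _
    rw [ih]
    by_cases hp : j % 2 = 0
    · rw [if_pos hp, if_neg (by omega : ¬ (j + 1) % 2 = 0)]
      exact der_b5 (n - j)
    · rw [if_neg hp, if_pos (by omega : (j + 1) % 2 = 0)]
      exact der_b2 (n - j)

lemma chain36 (n : ℕ) (ho : n % 2 = 1) :
    ∀ j, derIter (b3 n) j = if j % 2 = 0 then b3 (n - j) else b6 (n - j) := by
  intro j
  induction j with
  | zero => rw [if_pos rfl]; rfl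
  | succ j ih =>
    show der (derIter (b3 n) j) = _
    rw [ih]
    by_cases hp : j % 2 = 0
    · rw [if_pos hp, if_neg (by omega : ¬ (j + 1) % 2 = 0)]
      exact der_b3 (n - j) (by omega)
    · rw [if_neg hp, if_pos (by omega : (j + 1) % 2 = 0)]
      exact der_b6 (n - j)

lemma chain63 (n : ℕ) (ho : n % 2 = 1) :
    ∀ j, j + 2 ≤ n → derIter (b6 n) j = if j % 2 = 0 then b6 (n - j) else b3 (n - j) := by
  intro j
  induction j with
  | zero => intro _; rw [if_pos rfl]; rfl
  | succ j ih =>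
    intro h
    show der (derIter (b6 n) j) = _
    rw [ih (by omega)]
    by_cases hp : j % 2 = 0
    · rw [if_pos hp, if_neg (by omega : ¬ (j + 1) % 2 = 0)]
      exact der_b6 (n - j)
    · rw [if_neg hp, if_pos (by omega : (j + 1) % 2 = 0)]
      exact der_b3 (n - j) (by omega)

lemma derIter_b1_zero (n : ℕ) : ∀ (k : ℕ) (i : Fin (n - (k + 2))), derIter (b1 n) (k + 2) i = 0 := by
  intro k
  induction k with
  | zero =>
    intro i
    show der (der (b1 n)) i = 0
    rw [der_b1]
    show (1 : ZMod 2) + 1 = 0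
    decide
  | succ k ih =>
    intro i
    show der (derIter (b1 n) (k + 2)) i = 0
    simp only [der]
    rw [ih, ih]
    decide

lemma derIter_b4_zero (n : ℕ) : ∀ (k : ℕ) (i : Fin (n - (k + 2))), derIter (b4 n) (k + 2) i = 0 := by
  intro k
  induction k with
  | zero =>
    intro i
    show der (der (b4 n)) i = 0
    rw [der_b4]
    show (1 : ZMod 2) + 1 = 0
    decide
  | succ k ih =>
    intro i
    show der (derIter (b4 n) (k + 2)) i = 0
    simp only [der]
    rw [ih, ih]
    decide

/-! ### Triangle weights -/

lemma tw_b1 (n : ℕ) (hn : 5 ≤ n) (ho : n % 2 = 1) : tw (b1 n) = (3 * n - 1) / 2 := by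
  unfold tw
  have hz : ∀ x ∈ Finset.range n, x ∉ Finset.range 2 → wt (derIter (b1 n) x) = 0 := by
    intro x _ hx
    rw [Finset.mem_range, not_lt] at hx
    have hx2 : x = (x - 2) + 2 := by omega
    rw [hx2]
    exact wt_eq_zero _ (derIter_b1_zero n (x - 2))
  rw [← Finset.sum_subset (Finset.range_subset_range.mpr (by omega : 2 ≤ n)) hz]
  rw [Finset.sum_range_succ, Finset.sum_range_succ, Finset.sum_range_zero]
  have h0 : wt (derIter (b1 n) 0) = (n + 1) / 2 := wt_b1 n
  have h1 : wt (derIter (b1 n) 1) = n - 1 := by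
    show wt (der (b1 n)) = n - 1
    rw [der_b1]
    exact wt_const1 (n - 1)
  rw [h0, h1]
  omega

lemma tw_b4 (n : ℕ) (hn : 5 ≤ n) (ho : n % 2 = 1) : tw (b4 n) = (3 * n - 3) / 2 := by
  unfold tw
  have hz : ∀ x ∈ Finset.range n, x ∉ Finset.range 2 → wt (derIter (b4 n) x) = 0 := by
    intro x _ hx
    rw [Finset.mem_range, not_lt] at hx
    have hx2 : x = (x - 2) + 2 := by omega
    rw [hx2]
    exact wt_eq_zero _ (derIter_b4_zero n (x - 2))
  rw [← Finset.sum_subset (Finset.range_subset_range.mpr (by omega : 2 ≤ n)) hz]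
  rw [Finset.sum_range_succ, Finset.sum_range_succ, Finset.sum_range_zero]
  have h0 : wt (derIter (b4 n) 0) = n / 2 := wt_b4 n
  have h1 : wt (derIter (b4 n) 1) = n - 1 := by
    show wt (der (b4 n)) = n - 1
    rw [der_b4]
    exact wt_const1 (n - 1)
  rw [h0, h1]
  omega

lemma tw_b2 (n : ℕ) (hn : 5 ≤ n) (ho : n % 2 = 1) : tw (b2 n) = (3 * n - 3) / 2 := by
  unfold tw
  have key : ∀ j ∈ Finset.range n,
      wt (derIter (b2 n) j) = if j = n - 1 then 0 else if j % 2 = 0 then 1 else 2 := by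
    intro j hj
    rw [Finset.mem_range] at hj
    rw [chain25 n j]
    by_cases h1 : j = n - 1
    · rw [if_pos (by omega : j % 2 = 0), if_pos h1]
      have h2 : n - j = 1 := by omega
      rw [h2]
      decide
    · rw [if_neg h1]
      by_cases hp : j % 2 = 0
      · rw [if_pos hp, if_pos hp]
        exact wt_e (n - j) 1 (by omega)
      · rw [if_neg hp, if_neg hp]
        exact wt_b5 (n - j) (by omega)
  rw [Finset.sum_congr rfl key]
  obtain ⟨m, rfl⟩ : ∃ m, n = m + 1 := ⟨n - 1, by omega⟩
  rw [Finset.sum_range_succ]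
  simp only [Nat.add_sub_cancel, if_true]
  have h3 : ∀ j ∈ Finset.range m,
      (if j = m then 0 else if j % 2 = 0 then 1 else 2) = if j % 2 = 0 then 1 else 2 := by
    intro j hj
    rw [Finset.mem_range] at hj
    rw [if_neg (by omega)]
  rw [Finset.sum_congr rfl h3, sum_parity]
  omega

lemma tw_b5 (n : ℕ) (hn : 5 ≤ n) (ho : n % 2 = 1) : tw (b5 n) = (3 * n - 1) / 2 := by
  unfold tw
  have key : ∀ j ∈ Finset.range n,
      wt (derIter (b5 n) j) = if j = n - 1 then 1 else if j % 2 = 0 then 2 else 1 := by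
    intro j hj
    rw [Finset.mem_range] at hj
    rw [chain52 n j]
    by_cases h1 : j = n - 1
    · rw [if_pos (by omega : j % 2 = 0), if_pos h1]
      have h2 : n - j = 1 := by omega
      rw [h2]
      decide
    · rw [if_neg h1]
      by_cases hp : j % 2 = 0
      · rw [if_pos hp, if_pos hp]
        exact wt_b5 (n - j) (by omega)
      · rw [if_neg hp, if_neg hp]
        exact wt_e (n - j) 1 (by omega)
  rw [Finset.sum_congr rfl key]
  obtain ⟨m, rfl⟩ : ∃ m, n = m + 1 := ⟨n - 1, by omega⟩
  rw [Finset.sum_range_succ]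
  simp only [Nat.add_sub_cancel, if_true]
  have h3 : ∀ j ∈ Finset.range m,
      (if j = m then 1 else if j % 2 = 0 then 2 else 1) = if j % 2 = 0 then 2 else 1 := by
    intro j hj
    rw [Finset.mem_range] at hj
    rw [if_neg (by omega)]
  rw [Finset.sum_congr rfl h3, sum_parity]
  omega

lemma tw_b3 (n : ℕ) (hn : 5 ≤ n) (ho : n % 2 = 1) : tw (b3 n) = (3 * n - 1) / 2 := by
  unfold tw
  have key : ∀ j ∈ Finset.range n,
      wt (derIter (b3 n) j) = if j = n - 1 then 1 else if j % 2 = 0 then 2 else 1 := by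
    intro j hj
    rw [Finset.mem_range] at hj
    rw [chain36 n ho j]
    by_cases h1 : j = n - 1
    · rw [if_pos (by omega : j % 2 = 0), if_pos h1]
      have h2 : n - j = 1 := by omega
      rw [h2]
      decide
    · rw [if_neg h1]
      by_cases hp : j % 2 = 0
      · rw [if_pos hp, if_pos hp]
        exact wt_b3 (n - j) (by omega)
      · rw [if_neg hp, if_neg hp]
        exact wt_e (n - j) (n - j - 2) (by omega)
  rw [Finset.sum_congr rfl key]
  obtain ⟨m, rfl⟩ : ∃ m, n = m + 1 := ⟨n - 1, by omega⟩
  rw [Finset.sum_range_succ]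
  simp only [Nat.add_sub_cancel, if_true]
  have h3 : ∀ j ∈ Finset.range m,
      (if j = m then 1 else if j % 2 = 0 then 2 else 1) = if j % 2 = 0 then 2 else 1 := by
    intro j hj
    rw [Finset.mem_range] at hj
    rw [if_neg (by omega)]
  rw [Finset.sum_congr rfl h3, sum_parity]
  omega

lemma tw_b6 (n : ℕ) (hn : 5 ≤ n) (ho : n % 2 = 1) : tw (b6 n) = (3 * n - 3) / 2 := by
  unfold tw
  have hlast : ∀ i, derIter (b6 n) (n - 1) i = 0 := by
    have hn1 : n - 1 = n - 2 + 1 := by omega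
    rw [hn1]
    intro i
    show der (derIter (b6 n) (n - 2)) i = 0
    rw [chain63 n ho (n - 2) (by omega), if_neg (by omega : ¬ (n - 2) % 2 = 0)]
    have hi := i.2
    simp only [der, b3]
    split_ifs <;> first | decide | omega | (simp only [false_or, or_false] at *; omega)
  have key : ∀ j ∈ Finset.range n,
      wt (derIter (b6 n) j) = if j = n - 1 then 0 else if j % 2 = 0 then 1 else 2 := by
    intro j hj
    rw [Finset.mem_range] at hj
    by_cases h1 : j = n - 1
    · rw [if_pos h1]
      subst h1
      exact wt_eq_zero _ hlast
    · rw [if_neg h1, chain63 n ho j (by omega)]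
      by_cases hp : j % 2 = 0
      · rw [if_pos hp, if_pos hp]
        exact wt_e (n - j) (n - j - 2) (by omega)
      · rw [if_neg hp, if_neg hp]
        exact wt_b3 (n - j) (by omega)
  rw [Finset.sum_congr rfl key]
  obtain ⟨m, rfl⟩ : ∃ m, n = m + 1 := ⟨n - 1, by omega⟩
  rw [Finset.sum_range_succ]
  simp only [Nat.add_sub_cancel, if_true]
  have h3 : ∀ j ∈ Finset.range m,
      (if j = m then 0 else if j % 2 = 0 then 1 else 2) = if j % 2 = 0 then 1 else 2 := by
    intro j hj
    rw [Finset.mem_range] at hj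
    rw [if_neg (by omega)]
  rw [Finset.sum_congr rfl h3, sum_parity]
  omega

end Aux

theorem stmt10 (n : ℕ) (hn : 5 ≤ n) (hodd : Odd n) :
    tw (b1 n) = (3 * n - 1) / 2 ∧ tw (b3 n) = (3 * n - 1) / 2 ∧
    tw (b5 n) = (3 * n - 1) / 2 ∧
    tw (b2 n) = (3 * n - 3) / 2 ∧ tw (b4 n) = (3 * n - 3) / 2 ∧
    tw (b6 n) = (3 * n - 3) / 2 := by
  have ho : n % 2 = 1 := Nat.odd_iff.mp hodd
  exact ⟨tw_b1 n hn ho, tw_b3 n hn ho, tw_b5 n hn ho, tw_b2 n hn ho, tw_b4 n hn ho,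
    tw_b6 n hn ho⟩
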